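/- In the graph game on (G, C, s, R) constructed from the restricted quantified Boolean formula Q, the ∃-player has a winning strategy if and only if Q is true. -/

import Mathlib

namespace PhutballQBF

/-- A literal: a variable `xₗ` (`pos l`) or its negation `¬xₗ` (`neg l`). -/
inductive Lit where
  | pos (l : ℕ)
  | neg (l : ℕ)
deriving DecidableEq

/-- The index of the variable occurring in a literal. -/
def Lit.var : Lit → ℕ
  | .pos l => l
  | .neg l => l

/-- Evaluation of a literal under a Boolean assignment. -/
def Lit.eval (σ : ℕ → Bool) : Lit → Bool
  | .pos l => σ l
  | .neg l => !(σ l)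

/-- Well-formedness of the 3CNF `F = F₁ ∧ ⋯ ∧ F_m`: the literal `l_{i,j}` (for
`1 ≤ i ≤ m`, `1 ≤ j ≤ 3`) mentions one of the variables `x₁, …, xₙ`. -/
def LitWF (n m : ℕ) (lit : ℕ → ℕ → Lit) : Prop :=
  ∀ i j, 1 ≤ i → i ≤ m → 1 ≤ j → j ≤ 3 → 1 ≤ (lit i j).var ∧ (lit i j).var ≤ n

/-- The clause `Fᵢ = (l_{i,1} ∨ l_{i,2} ∨ l_{i,3})` evaluates to true under `σ`. -/
def ClauseTrue (lit : ℕ → ℕ → Lit) (i : ℕ) (σ : ℕ → Bool) : Prop :=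
  ∃ j, 1 ≤ j ∧ j ≤ 3 ∧ (lit i j).eval σ = true

/-- The 3CNF formula `F = F₁ ∧ ⋯ ∧ F_m` evaluates to true under `σ`. -/
def FTrue (lit : ℕ → ℕ → Lit) (m : ℕ) (σ : ℕ → Bool) : Prop :=
  ∀ i, 1 ≤ i → i ≤ m → ClauseTrue lit i σ

/-- `QAux P i k σ`: the quantified statement with `k` variables `x_i, …, x_{i+k-1}`
still to be quantified (existentially when the index is odd, universally when even),
the remaining variables having the values recorded in `σ`. -/
def QAux (P : (ℕ → Bool) → Prop) : ℕ → ℕ → (ℕ → Bool) → Prop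
  | _, 0, σ => P σ
  | i, k + 1, σ =>
      if i % 2 = 1 then ∃ b, QAux P (i + 1) k (Function.update σ i b)
      else ∀ b, QAux P (i + 1) k (Function.update σ i b)

/-- Truth of the restricted quantified Boolean formula
`Q = ∃x₁ ∀x₂ ∃x₃ ⋯ ∀xₙ F(x₁, …, xₙ)`. -/
def QTrue (n m : ℕ) (lit : ℕ → ℕ → Lit) : Prop :=
  QAux (FTrue lit m) 1 n (fun _ => false)

/-- The vertices of the graph `G` built from `Q` (with natural-number indices;
`g 0` is the extra vertex `g₀`). -/
inductive Vtx where
  | a (i : ℕ) | b (i : ℕ) | c (i : ℕ) | d (i : ℕ) | e (i : ℕ) | f (i : ℕ) | g (i : ℕ)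
  | x (i : ℕ) | y (i : ℕ) | z (i : ℕ) | w (i : ℕ) (j : ℕ)
deriving DecidableEq

/-- A directed edge. -/
abbrev Edge := Vtx × Vtx

/-- The edge set `E(G)` of the graph `G` constructed from `Q` (with `n` variables and
`m` clauses): the variable components `G(xᵢ)`, the connecting edges `(gᵢ, aᵢ₊₁)` for
`i = 0, …, n-1`, the edge `(gₙ, x₁)`, and the formula component `G(F)`. -/
def EG (n m : ℕ) : Set Edge :=
  { p | (∃ i, 1 ≤ i ∧ i ≤ n ∧
          (p = (Vtx.a i, Vtx.b i) ∨ p = (Vtx.a i, Vtx.c i) ∨ p = (Vtx.b i, Vtx.e i) ∨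
           p = (Vtx.c i, Vtx.f i) ∨ p = (Vtx.e i, Vtx.d i) ∨ p = (Vtx.f i, Vtx.d i) ∨
           p = (Vtx.d i, Vtx.g i))) ∨
        (∃ i, i ≤ n - 1 ∧ p = (Vtx.g i, Vtx.a (i + 1))) ∨
        p = (Vtx.g n, Vtx.x 1) ∨
        (∃ i, 1 ≤ i ∧ i ≤ m ∧
          (p = (Vtx.x i, Vtx.y i) ∨ p = (Vtx.y i, Vtx.z i) ∨ p = (Vtx.z i, Vtx.w i 1) ∨
           p = (Vtx.w i 1, Vtx.w i 2) ∨ p = (Vtx.w i 2, Vtx.w i 3))) ∨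
        (∃ i, 1 ≤ i ∧ i ≤ m - 1 ∧ p = (Vtx.x i, Vtx.x (i + 1))) }

/-- The set `C = {g₀, g₁, …, g_{n-1}} ∪ {z₁, …, z_m}`. -/
def Cset (n m : ℕ) : Set Vtx :=
  { v | (∃ i, i ≤ n - 1 ∧ v = Vtx.g i) ∨ (∃ i, 1 ≤ i ∧ i ≤ m ∧ v = Vtx.z i) }

/-- The relation `R ⊆ V(G) × E(G)`: `(w_{i,j}, (bₗ, eₗ)) ∈ R` iff `l_{i,j} = xₗ`, and
`(w_{i,j}, (cₗ, fₗ)) ∈ R` iff `l_{i,j} = ¬xₗ`. -/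
def Rrel (lit : ℕ → ℕ → Lit) (m : ℕ) : Set (Vtx × Edge) :=
  { p | ∃ i j, 1 ≤ i ∧ i ≤ m ∧ 1 ≤ j ∧ j ≤ 3 ∧
        ((∃ l, lit i j = Lit.pos l ∧ p = (Vtx.w i j, (Vtx.b l, Vtx.e l))) ∨
         (∃ l, lit i j = Lit.neg l ∧ p = (Vtx.w i j, (Vtx.c l, Vtx.f l)))) }

/-- `Rinv R E = R⁻¹(E)`: the vertices pointing some edge of `E`. -/
def Rinv (R : Set (Vtx × Edge)) (E : Set Edge) : Set Vtx :=
  { v | ∃ e ∈ E, (v, e) ∈ R }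

/-- The set of (directed) edges traversed by a path given as its list of vertices. -/
def pathEdges (p : List Vtx) : Set Edge := { e | e ∈ p.zip p.tail }

/-- A legal move of the graph game from active vertex `u ∈ C` with current edge set `E`
along the directed path `p` (a list of at least two pairwise distinct vertices whose
consecutive pairs are edges of `E`), ending at a vertex `v ∈ C ∪ R⁻¹(E)`, with all
internal vertices of `p` outside `C ∪ R⁻¹(E)`; the resulting edge set `E'` is obtained
by deleting the edges of `p` from `E`. -/
def LegalMoveVia (C : Set Vtx) (R : Set (Vtx × Edge))
    (u : Vtx) (E : Set Edge) (v : Vtx) (E' : Set Edge) (p : List Vtx) : Prop :=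
  u ∈ C ∧ v ∈ C ∪ Rinv R E ∧
  2 ≤ p.length ∧ p.Nodup ∧
  p.head? = some u ∧ p.getLast? = some v ∧
  List.Chain' (fun a b => (a, b) ∈ E) p ∧
  (∀ w ∈ (p.drop 1).dropLast, w ∉ C ∪ Rinv R E) ∧
  E' = E \ pathEdges p

/-- A legal move from `(u, E)` to `(v, E')` (along some path). -/
def LegalMove (C : Set Vtx) (R : Set (Vtx × Edge))
    (u : Vtx) (E : Set Edge) (v : Vtx) (E' : Set Edge) : Prop :=
  ∃ p, LegalMoveVia C R u E v E' p

/-- `MoverWins C R true u E` says that the player to move at the position with active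
vertex `u` and current edge set `E` has a winning strategy; `MoverWins C R false u E`
says that the player to move loses whatever he does (in particular, if he has no legal
move he loses immediately; a move to a vertex of `R⁻¹(E)` wins the game for the mover). -/
inductive MoverWins (C : Set Vtx) (R : Set (Vtx × Edge)) : Bool → Vtx → Set Edge → Prop
  | winsNow {u E v E'} : LegalMove C R u E v E' → v ∈ Rinv R E →
      MoverWins C R true u E
  | winsLater {u E v E'} : LegalMove C R u E v E' → MoverWins C R false v E' →
      MoverWins C R true u E
  | loses {u E} :
      (∀ v E', LegalMove C R u E v E' → v ∉ Rinv R E) →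
      (∀ v E', LegalMove C R u E v E' → MoverWins C R true v E') →
      MoverWins C R false u E

/-- The two players of the graph game. -/
inductive Player where
  | ex | fa
deriving DecidableEq

/-- The opponent of a player. -/
def Player.other : Player → Player
  | .ex => .fa
  | .fa => .ex

/-- A (maximal) play of the graph game on `(G, C, s, R)` starting from active vertex `s`
and edge set `E0`, with the ∃-player moving first.  `act k` and `edg k` are the active
vertex and edge set after `k` moves, `turn k` is the player who makes the `(k+1)`-st
move, and `len` is the total number of moves.  The play stops either because its last
move reached a vertex of `R⁻¹(E)` (the mover wins) or because the player to move has no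
legal move (he loses); before that, no move may end in `R⁻¹(E)` without stopping. -/
structure Play (C : Set Vtx) (R : Set (Vtx × Edge)) (s : Vtx) (E0 : Set Edge) where
  len : ℕ
  act : ℕ → Vtx
  edg : ℕ → Set Edge
  turn : ℕ → Player
  init_act : act 0 = s
  init_edg : edg 0 = E0
  init_turn : turn 0 = Player.ex
  turn_alt : ∀ k, turn (k + 1) = (turn k).other
  step : ∀ k, k < len → LegalMove C R (act k) (edg k) (act (k + 1)) (edg (k + 1))
  not_over : ∀ k, k + 1 < len → act (k + 1) ∉ Rinv R (edg k)
  maximal : (0 < len ∧ act len ∈ Rinv R (edg (len - 1))) ∨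
            (∀ v E', ¬ LegalMove C R (act len) (edg len) v E')

/-!
Passing through the component `G(x_l)` along `b_l, e_l` or along `c_l, f_l` sets `x_l` to
false or to true, and deletes exactly the edge `(b_l, e_l)` or `(c_l, f_l)` that keeps the
literal `x_l` or `¬x_l` alive, i.e. the one made false. Every move from `g_k` with `k < n - 1`
runs through `G(x_{k+1})` to `g_{k+1}`, so the two players alternately choose `x₁, x₂, …` as
the quantifier prefix prescribes. The move from `g_{n-1}`, made by the `∀`-player since `n` is
even, continues along the `x`-chain to a clause vertex `z_i` of that player's choice. From
`z_i` the `∃`-player can only walk along `w_{i,1} → w_{i,2} → w_{i,3}`, and has a legal move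
(which then wins at once) exactly when some literal of `F_i` is still alive, i.e. true. An
induction on `k` matches the positions at `g_k` with the quantified formula that remains.
-/

section Game

variable {C : Set Vtx} {R : Set (Vtx × Edge)} {u v : Vtx} {E F : Set Edge}

lemma pathEdges_singleton (a : Vtx) : pathEdges [a] = ∅ := by
  simp [pathEdges]

lemma pathEdges_cons_cons (a b : Vtx) (l : List Vtx) :
    pathEdges (a :: b :: l) = insert (a, b) (pathEdges (b :: l)) := by
  ext; simp [pathEdges]

lemma pathEdges_append_cons (l r : List Vtx) (v : Vtx) :
    pathEdges (l ++ v :: r) = pathEdges (l ++ [v]) ∪ pathEdges (v :: r) := by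
  induction l with
  | nil => simp [pathEdges_singleton]
  | cons a l ih =>
    cases l with
    | nil => simp [pathEdges_cons_cons, pathEdges_singleton]
    | cons b l =>
      simp only [List.cons_append, pathEdges_cons_cons] at ih ⊢
      rw [ih, Set.insert_union]

lemma mem_of_mem_pathEdges {p : List Vtx} {e : Edge} (h : e ∈ pathEdges p) :
    e.1 ∈ p ∧ e.2 ∈ p.tail :=
  List.of_mem_zip h

lemma isChain_iff_pathEdges_subset {p : List Vtx} :
    p.IsChain (fun a b => (a, b) ∈ E) ↔ pathEdges p ⊆ E := by
  induction p using List.twoStepInduction with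
  | nil => simp [pathEdges]
  | singleton a => simp [pathEdges_singleton]
  | cons_cons a b l _ ih =>
    simp [List.isChain_cons_cons, pathEdges_cons_cons, ih, Set.insert_subset_iff]

/-- `u :: q` is a walk in `E` that stops at its first vertex in `S`; a move is such a walk with
`S = C ∪ R⁻¹(E)`. -/
inductive StoppingWalk (E : Set Edge) (S : Set Vtx) : Vtx → List Vtx → Prop
  | single {u v : Vtx} : (u, v) ∈ E → v ∈ S → StoppingWalk E S u [v]
  | cons {u v : Vtx} {q : List Vtx} :
      (u, v) ∈ E → v ∉ S → StoppingWalk E S v q → StoppingWalk E S u (v :: q)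

namespace StoppingWalk

variable {S : Set Vtx} {q : List Vtx}

lemma of_isChain (hq : q ≠ []) (hch : (u :: q).IsChain (fun a b => (a, b) ∈ E))
    (hint : ∀ w ∈ q.dropLast, w ∉ S) (hlast : ∀ v ∈ q.getLast?, v ∈ S) :
    StoppingWalk E S u q := by
  induction q generalizing u with
  | nil => exact absurd rfl hq
  | cons w q ih =>
    rw [List.isChain_cons_cons] at hch
    cases q with
    | nil => exact single hch.1 (hlast w rfl)
    | cons x q =>
      refine cons hch.1 (hint w (by simp)) (ih (by simp) hch.2 ?_ ?_)
      · exact fun y hy => hint y (by simp [hy])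
      · exact fun y hy => hlast y (by simpa using hy)

lemma eq_cons_of_forced (hforced : ∀ v', (u, v') ∈ E → v' = v) (hv : v ∉ S)
    (hw : StoppingWalk E S u q) : ∃ q', q = v :: q' ∧ StoppingWalk E S v q' := by
  cases hw with
  | single he hS => exact absurd (hforced _ he ▸ hS) hv
  | cons he _ hw => obtain rfl := hforced _ he; exact ⟨_, rfl, hw⟩

lemma eq_singleton_of_forced (hforced : ∀ v', (u, v') ∈ E → v' = v) (hv : v ∈ S)
    (hw : StoppingWalk E S u q) : q = [v] := by
  cases hw with
  | single he _ => rw [hforced _ he]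
  | cons he hS _ => exact absurd (hforced _ he ▸ hv) hS

lemma transGen (hw : StoppingWalk E S u q) (hv : q.getLast? = some v) :
    Relation.TransGen (fun a b => (a, b) ∈ E) u v := by
  induction hw with
  | single he _ =>
    obtain rfl : _ = v := by simpa using hv
    exact .single he
  | cons he _ hw ih =>
    exact .head he (ih (by cases hw <;> simpa [List.getLast?_cons_cons] using hv))

end StoppingWalk

lemma LegalMoveVia.exists_stoppingWalk {p : List Vtx} (h : LegalMoveVia C R u E v F p) :
    ∃ q, p = u :: q ∧ StoppingWalk E (C ∪ Rinv R E) u q ∧ q.getLast? = some v ∧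
      F = E \ pathEdges p := by
  obtain ⟨-, hv, hlen, -, hhead, hlast, hch, hint, rfl⟩ := h
  obtain _ | ⟨a, _ | ⟨b, q⟩⟩ := p
  · simp at hhead
  · simp at hlen
  obtain rfl : a = u := by simpa using hhead
  rw [List.getLast?_cons_cons] at hlast
  refine ⟨b :: q, rfl, StoppingWalk.of_isChain (by simp) hch (by simpa using hint) ?_, hlast, rfl⟩
  intro w hw
  rw [hlast] at hw
  obtain rfl : v = w := by simpa using hw
  exact hv

lemma legalMoveVia_of_pathEdges_subset {q : List Vtx} (hu : u ∈ C) (hnd : (u :: q).Nodup)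
    (hE : pathEdges (u :: q) ⊆ E) (hint : ∀ w ∈ q.dropLast, w ∉ C ∪ Rinv R E)
    (hlast : q.getLast? = some v) (hv : v ∈ C ∪ Rinv R E) :
    LegalMoveVia C R u E v (E \ pathEdges (u :: q)) (u :: q) := by
  obtain _ | ⟨a, q⟩ := q
  · simp at hlast
  refine ⟨hu, hv, by simp, hnd, rfl, ?_, isChain_iff_pathEdges_subset.2 hE, ?_, rfl⟩
  · rwa [List.getLast?_cons_cons]
  · simpa using hint

lemma moverWins_true_iff (hmv : ∀ v F, LegalMove C R u E v F → v ∉ Rinv R E) :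
    MoverWins C R true u E ↔ ∃ v F, LegalMove C R u E v F ∧ MoverWins C R false v F := by
  refine ⟨fun h => ?_, fun ⟨_, _, hm, hw⟩ => .winsLater hm hw⟩
  cases h with
  | winsNow hm hv => exact absurd hv (hmv _ _ hm)
  | winsLater hm hw => exact ⟨_, _, hm, hw⟩

lemma moverWins_false_iff :
    MoverWins C R false u E ↔ (∀ v F, LegalMove C R u E v F → v ∉ Rinv R E) ∧
      ∀ v F, LegalMove C R u E v F → MoverWins C R true v F := by
  refine ⟨fun h => ?_, fun ⟨h₁, h₂⟩ => .loses h₁ h₂⟩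
  cases h with
  | loses h₁ h₂ => exact ⟨h₁, h₂⟩

end Game

section Construction

variable {n m : ℕ} {lit : ℕ → ℕ → Lit} {i j k t c : ℕ} {u v : Vtx} {b : Bool} {σ : ℕ → Bool}
  {E F : Set Edge} {q : List Vtx}

/-- The two arms `aᵢ → bᵢ → eᵢ → dᵢ` (`false`) and `aᵢ → cᵢ → fᵢ → dᵢ` (`true`) of `G(xᵢ)`. -/
@[simp]
def Vtx.armStart : Bool → ℕ → Vtx
  | false => .b
  | true => .c

@[simp]
def Vtx.armEnd : Bool → ℕ → Vtx
  | false => .e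
  | true => .f

lemma mem_EG_g_iff : (Vtx.g i, v) ∈ EG n m ↔
    (i ≤ n - 1 ∧ v = Vtx.a (i + 1)) ∨ (i = n ∧ v = Vtx.x 1) := by
  simp [EG]

lemma mem_EG_a_iff : (Vtx.a i, v) ∈ EG n m ↔ 1 ≤ i ∧ i ≤ n ∧ ∃ b, v = Vtx.armStart b i := by
  simp [EG]; grind

lemma mem_EG_armStart_iff :
    (Vtx.armStart b i, v) ∈ EG n m ↔ 1 ≤ i ∧ i ≤ n ∧ v = Vtx.armEnd b i := by
  cases b <;> simp [EG]

lemma mem_EG_armEnd_iff :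
    (Vtx.armEnd b i, v) ∈ EG n m ↔ 1 ≤ i ∧ i ≤ n ∧ v = Vtx.d i := by
  cases b <;> simp [EG]

lemma mem_EG_d_iff : (Vtx.d i, v) ∈ EG n m ↔ 1 ≤ i ∧ i ≤ n ∧ v = Vtx.g i := by
  simp [EG]

lemma mem_EG_x_iff : (Vtx.x i, v) ∈ EG n m ↔
    1 ≤ i ∧ ((i ≤ m ∧ v = Vtx.y i) ∨ (i ≤ m - 1 ∧ v = Vtx.x (i + 1))) := by
  simp [EG]; grind

lemma mem_EG_y_iff : (Vtx.y i, v) ∈ EG n m ↔ 1 ≤ i ∧ i ≤ m ∧ v = Vtx.z i := by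
  simp [EG]

lemma mem_EG_z_iff : (Vtx.z i, v) ∈ EG n m ↔ 1 ≤ i ∧ i ≤ m ∧ v = Vtx.w i 1 := by
  simp [EG]

lemma mem_EG_w_iff : (Vtx.w i j, v) ∈ EG n m ↔
    1 ≤ i ∧ i ≤ m ∧ ((j = 1 ∧ v = Vtx.w i 2) ∨ (j = 2 ∧ v = Vtx.w i 3)) := by
  simp [EG]; grind

/-- The edge whose presence keeps `w_{i,j}` in `R⁻¹(E)` when `l_{i,j}` is this literal. -/
def Lit.edge : Lit → Edge
  | .pos l => (Vtx.b l, Vtx.e l)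
  | .neg l => (Vtx.c l, Vtx.f l)

lemma mem_Rinv_Rrel_iff : v ∈ Rinv (Rrel lit m) E ↔
    ∃ i j, 1 ≤ i ∧ i ≤ m ∧ 1 ≤ j ∧ j ≤ 3 ∧ v = Vtx.w i j ∧ (lit i j).edge ∈ E := by
  simp only [Rinv, Rrel]
  constructor
  · rintro ⟨e, he, i, j, hi, hi', hj, hj', ⟨l, hl, h⟩ | ⟨l, hl, h⟩⟩ <;>
      simp only [Prod.mk.injEq] at h <;> obtain ⟨rfl, rfl⟩ := h <;>
      exact ⟨i, j, hi, hi', hj, hj', rfl, by simpa [hl, Lit.edge] using he⟩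
  · rintro ⟨i, j, hi, hi', hj, hj', rfl, he⟩
    refine ⟨_, he, i, j, hi, hi', hj, hj', ?_⟩
    cases lit i j <;> simp [Lit.edge]

/-- The vertices after `g k` on the path through `G(x_{k+1})` that sets `x_{k+1} := b`. -/
def gadgetPath (k : ℕ) (b : Bool) : List Vtx :=
  [Vtx.a (k + 1), Vtx.armStart b (k + 1), Vtx.armEnd b (k + 1), Vtx.d (k + 1), Vtx.g (k + 1)]

def xPath : ℕ → ℕ → List Vtx
  | t, 0 => [Vtx.x t, Vtx.y t, Vtx.z t]
  | t, c + 1 => Vtx.x t :: xPath (t + 1) c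

def deletedEdges (σ : ℕ → Bool) (k : ℕ) : Set Edge :=
  ⋃ l < k, pathEdges (Vtx.g l :: gadgetPath l (σ (l + 1)))

/-- The edge set when `g k` becomes active, the first `k` moves having set `x₁, …, x_k` as `σ`
does. -/
def edgesAfter (n m : ℕ) (σ : ℕ → Bool) (k : ℕ) : Set Edge :=
  EG n m \ deletedEdges σ k

/-- The edge set when `z i` becomes active after the `n`-th move. -/
def clauseEdges (n m : ℕ) (σ : ℕ → Bool) (i : ℕ) : Set Edge :=
  edgesAfter n m σ n \ pathEdges (Vtx.g n :: xPath 1 (i - 1))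

lemma Lit.edge_mem_pathEdges_gadgetPath {L : Lit} :
    L.edge ∈ pathEdges (Vtx.g k :: gadgetPath k b) ↔
      L.var = k + 1 ∧ L.eval (fun _ => b) = false := by
  cases L <;> cases b <;>
    simp [Lit.edge, Lit.var, Lit.eval, gadgetPath, pathEdges, Vtx.armStart, Vtx.armEnd, eq_comm]

lemma Lit.edge_mem_deletedEdges {L : Lit} :
    L.edge ∈ deletedEdges σ k ↔ 1 ≤ L.var ∧ L.var ≤ k ∧ L.eval σ = false := by
  have heval : L.eval (fun _ => σ L.var) = L.eval σ := by cases L <;> rfl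
  simp only [deletedEdges, Set.mem_iUnion, Lit.edge_mem_pathEdges_gadgetPath, exists_prop]
  constructor
  · rintro ⟨l, hl, hvar, hev⟩
    exact ⟨by omega, by omega, by rwa [← heval, hvar]⟩
  · rintro ⟨h1, h2, hev⟩
    exact ⟨L.var - 1, by omega, by omega, by rwa [Nat.sub_add_cancel h1, heval]⟩

lemma mem_xPath (h : v ∈ xPath t c) :
    (∃ j, t ≤ j ∧ j ≤ t + c ∧ v = Vtx.x j) ∨ v = Vtx.y (t + c) ∨ v = Vtx.z (t + c) := by
  induction c generalizing t with
  | zero => simp [xPath] at h; grind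
  | succ c ih =>
    rcases List.mem_cons.1 h with rfl | h
    · exact .inl ⟨t, le_rfl, by omega, rfl⟩
    · rw [show t + (c + 1) = t + 1 + c by omega]
      rcases ih h with ⟨j, hj, hj', rfl⟩ | h | h
      · exact .inl ⟨j, by omega, hj', rfl⟩
      all_goals simp [h]

lemma Lit.edge_mem_clauseEdges {L : Lit} (h1 : 1 ≤ L.var) (h2 : L.var ≤ n) :
    L.edge ∈ clauseEdges n m σ i ↔ L.eval σ = true := by
  have hEG : L.edge ∈ EG n m := by cases L <;> simp_all [Lit.edge, Lit.var, EG]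
  have hpath : L.edge ∉ pathEdges (Vtx.g n :: xPath 1 (i - 1)) := fun h => by
    have := (mem_of_mem_pathEdges h).2
    cases L <;> simpa [Lit.edge] using mem_xPath this
  simp [clauseEdges, edgesAfter, hEG, hpath, Lit.edge_mem_deletedEdges, h1, h2]

lemma w_mem_Rinv_clauseEdges_iff (hwf : LitWF n m lit) {i' : ℕ} (hi : 1 ≤ i) (hi' : i ≤ m)
    (hj : 1 ≤ j) (hj' : j ≤ 3) :
    Vtx.w i j ∈ Rinv (Rrel lit m) (clauseEdges n m σ i') ↔ (lit i j).eval σ = true := by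
  obtain ⟨h1, h2⟩ := hwf i j hi hi' hj hj'
  simp [mem_Rinv_Rrel_iff, Lit.edge_mem_clauseEdges h1 h2, hi, hi', hj, hj']

lemma deletedEdges_zero : deletedEdges σ 0 = ∅ := by
  simp [deletedEdges]

lemma deletedEdges_succ : deletedEdges (Function.update σ (k + 1) b) (k + 1) =
    deletedEdges σ k ∪ pathEdges (Vtx.g k :: gadgetPath k b) := by
  ext e
  simp only [deletedEdges, Set.mem_iUnion, Set.mem_union, exists_prop, Nat.lt_succ_iff_lt_or_eq]
  constructor
  · rintro ⟨l, hl | rfl, he⟩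
    · exact .inl ⟨l, hl, by rwa [Function.update_of_ne (by omega)] at he⟩
    · exact .inr (by rwa [Function.update_self] at he)
  · rintro (⟨l, hl, he⟩ | he)
    · exact ⟨l, .inl hl, by rwa [Function.update_of_ne (by omega)]⟩
    · exact ⟨k, .inr rfl, by rwa [Function.update_self]⟩

lemma edgesAfter_succ : edgesAfter n m σ k \ pathEdges (Vtx.g k :: gadgetPath k b) =
    edgesAfter n m (Function.update σ (k + 1) b) (k + 1) := by
  rw [edgesAfter, edgesAfter, deletedEdges_succ, Set.sdiff_sdiff]

lemma notMem_deletedEdges (hv : ∀ l b, v ∉ gadgetPath l b) :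
    (u, v) ∉ deletedEdges σ k := by
  simp only [deletedEdges, Set.mem_iUnion, not_exists]
  exact fun l _ he => hv l _ (mem_of_mem_pathEdges he).2

lemma eq_of_mem_gadgetPath {b' : Bool} {l : ℕ} (h : v ∈ gadgetPath k b)
    (h' : v ∈ gadgetPath l b') : k = l := by
  cases b <;> cases b' <;> simp only [gadgetPath, List.mem_cons, List.not_mem_nil] at h h' <;>
    rcases h with rfl | rfl | rfl | rfl | rfl | h <;> simp_all

lemma pathEdges_gadgetPath_subset (hk : k < n) :
    pathEdges (Vtx.g k :: gadgetPath k b) ⊆ edgesAfter n m σ k := by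
  intro e he
  refine ⟨?_, fun hdel => ?_⟩
  · cases b <;> simp [gadgetPath, pathEdges] at he <;>
      rcases he with rfl | rfl | rfl | rfl | rfl <;> simp [EG] <;> omega
  · simp only [deletedEdges, Set.mem_iUnion, exists_prop] at hdel
    obtain ⟨l, hl, hel⟩ := hdel
    have := eq_of_mem_gadgetPath (mem_of_mem_pathEdges he).2 (mem_of_mem_pathEdges hel).2
    omega

lemma xPath_eq_cons (t c : ℕ) : ∃ l, xPath t c = Vtx.x t :: l := by
  cases c <;> exact ⟨_, rfl⟩

lemma pathEdges_xPath_subset (ht : 1 ≤ t) (hc : t + c ≤ m) :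
    pathEdges (xPath t c) ⊆ edgesAfter n m σ k := by
  induction c generalizing t with
  | zero =>
    simp only [xPath, pathEdges_cons_cons, pathEdges_singleton, Set.insert_subset_iff]
    exact ⟨⟨by simp [EG]; omega, notMem_deletedEdges (by simp [gadgetPath])⟩,
      ⟨by simp [EG]; omega, notMem_deletedEdges (by simp [gadgetPath])⟩, Set.empty_subset _⟩
  | succ c ih =>
    obtain ⟨l, hl⟩ := xPath_eq_cons (t + 1) c
    rw [xPath, hl, pathEdges_cons_cons, ← hl, Set.insert_subset_iff]
    exact ⟨⟨by simp [EG]; omega, notMem_deletedEdges (by simp [gadgetPath])⟩,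
      ih (by omega) (by omega)⟩

lemma nodup_xPath : (xPath t c).Nodup := by
  induction c generalizing t with
  | zero => simp [xPath]
  | succ c ih =>
    refine List.nodup_cons.2 ⟨fun h => ?_, ih⟩
    rcases mem_xPath h with ⟨j, hj, -, hx⟩ | h | h
    · simp only [Vtx.x.injEq] at hx
      omega
    all_goals simp at h

lemma getLast?_xPath : (xPath t c).getLast? = some (Vtx.z (t + c)) := by
  induction c generalizing t with
  | zero => rfl
  | succ c ih =>
    obtain ⟨l, hl⟩ := xPath_eq_cons (t + 1) c
    rw [xPath, hl, List.getLast?_cons_cons, ← hl, ih, Nat.add_right_comm, Nat.add_assoc]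

lemma mem_dropLast_xPath (h : v ∈ (xPath t c).dropLast) :
    (∃ j, v = Vtx.x j) ∨ ∃ j, v = Vtx.y j := by
  induction c generalizing t with
  | zero => simp [xPath] at h; grind
  | succ c ih =>
    obtain ⟨l, hl⟩ := xPath_eq_cons (t + 1) c
    rw [xPath, hl, List.dropLast_cons_cons, ← hl] at h
    rcases List.mem_cons.1 h with rfl | h
    exacts [.inl ⟨t, rfl⟩, ih h]

lemma pathEdges_gadgetPath_append (k c : ℕ) (b : Bool) :
    pathEdges (Vtx.g k :: (gadgetPath k b ++ xPath 1 c)) =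
      pathEdges (Vtx.g k :: gadgetPath k b) ∪ pathEdges (Vtx.g (k + 1) :: xPath 1 c) :=
  pathEdges_append_cons [Vtx.g k, .a (k + 1), .armStart b (k + 1), .armEnd b (k + 1), .d (k + 1)]
    _ _

lemma pathEdges_g_xPath_subset (hc : c + 1 ≤ m) :
    pathEdges (Vtx.g n :: xPath 1 c) ⊆ edgesAfter n m σ k := by
  obtain ⟨l, hl⟩ := xPath_eq_cons 1 c
  rw [hl, pathEdges_cons_cons, ← hl, Set.insert_subset_iff]
  exact ⟨⟨by simp [EG], notMem_deletedEdges (by simp [gadgetPath])⟩,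
    pathEdges_xPath_subset le_rfl (by omega)⟩

lemma mem_clauseEdges_of_mem_EG (h : (u, Vtx.w i j) ∈ EG n m) :
    (u, Vtx.w i j) ∈ clauseEdges n m σ k := by
  refine ⟨⟨h, notMem_deletedEdges (by simp [gadgetPath])⟩, fun hp => ?_⟩
  have := (mem_of_mem_pathEdges hp).2
  simpa using mem_xPath this

lemma StoppingWalk.eq_xPath (hE : E ⊆ EG n m)
    (hw : StoppingWalk E (Cset n m ∪ Rinv (Rrel lit m) E) (Vtx.x t) q) :
    ∃ c, t + c ≤ m ∧ Vtx.x t :: q = xPath t c := by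
  generalize hu : Vtx.x t = u at hw
  induction hw generalizing t with
  | single he hv =>
    subst hu
    rcases mem_EG_x_iff.1 (hE he) with ⟨-, ⟨-, rfl⟩ | ⟨-, rfl⟩⟩ <;>
      simp [Cset, mem_Rinv_Rrel_iff] at hv
  | cons he _ hw ih =>
    subst hu
    rcases mem_EG_x_iff.1 (hE he) with ⟨ht, ⟨htm, rfl⟩ | ⟨-, rfl⟩⟩
    · obtain rfl := hw.eq_singleton_of_forced (fun _ h => (mem_EG_y_iff.1 (hE h)).2.2)
        (by simp [Cset, ht, htm])
      exact ⟨0, by omega, rfl⟩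
    · obtain ⟨c, hc, hq⟩ := ih rfl
      exact ⟨c + 1, by omega, by rw [xPath, hq]⟩

lemma StoppingWalk.eq_gadgetPath (hE : E ⊆ EG n m) (hk : k < n)
    (hw : StoppingWalk E (Cset n m ∪ Rinv (Rrel lit m) E) (Vtx.g k) q) :
    ∃ b, (k + 1 < n ∧ q = gadgetPath k b) ∨
      (k + 1 = n ∧ ∃ c, c + 1 ≤ m ∧ q = gadgetPath k b ++ xPath 1 c) := by
  obtain ⟨q, rfl, hwa⟩ := hw.eq_cons_of_forced (v := Vtx.a (k + 1))
    (fun _ h => by rcases mem_EG_g_iff.1 (hE h) with ⟨-, rfl⟩ | ⟨rfl, -⟩ <;> first | rfl | omega)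
    (by simp [Cset, mem_Rinv_Rrel_iff])
  cases hwa with
  | single he hv =>
    obtain ⟨-, -, b, rfl⟩ := mem_EG_a_iff.1 (hE he)
    cases b <;> simp [Cset, mem_Rinv_Rrel_iff] at hv
  | cons he hv hws =>
    obtain ⟨-, -, b, rfl⟩ := mem_EG_a_iff.1 (hE he)
    obtain ⟨q, rfl, hwe⟩ := hws.eq_cons_of_forced (fun _ h => (mem_EG_armStart_iff.1 (hE h)).2.2)
      (by cases b <;> simp [Cset, mem_Rinv_Rrel_iff])
    obtain ⟨q, rfl, hwd⟩ := hwe.eq_cons_of_forced (fun _ h => (mem_EG_armEnd_iff.1 (hE h)).2.2)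
      (by simp [Cset, mem_Rinv_Rrel_iff])
    refine ⟨b, ?_⟩
    by_cases hlt : k + 1 < n
    · refine .inl ⟨hlt, ?_⟩
      rw [hwd.eq_singleton_of_forced (fun _ h => (mem_EG_d_iff.1 (hE h)).2.2)
        (by simp [Cset]; omega)]
      rfl
    obtain ⟨q, rfl, hwg⟩ := hwd.eq_cons_of_forced (fun _ h => (mem_EG_d_iff.1 (hE h)).2.2)
      (by simp [Cset, mem_Rinv_Rrel_iff]; omega)
    obtain ⟨q, rfl, hwx⟩ := hwg.eq_cons_of_forced (v := Vtx.x 1)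
      (fun _ h => by rcases mem_EG_g_iff.1 (hE h) with ⟨_, -⟩ | ⟨-, rfl⟩ <;> first | rfl | omega)
      (by simp [Cset, mem_Rinv_Rrel_iff])
    obtain ⟨c, hc, hq⟩ := hwx.eq_xPath hE
    exact .inr ⟨by omega, c, by omega, by rw [← hq]; rfl⟩

lemma transGen_z (hE : E ⊆ EG n m) (h : Relation.TransGen (fun a b => (a, b) ∈ E) (Vtx.z i) v) :
    ∃ j, 1 ≤ j ∧ j ≤ 3 ∧ v = Vtx.w i j := by
  induction h with
  | single he => exact ⟨1, le_rfl, by omega, (mem_EG_z_iff.1 (hE he)).2.2⟩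
  | tail _ he ih =>
    obtain ⟨j, -, -, rfl⟩ := ih
    obtain ⟨-, -, ⟨rfl, rfl⟩ | ⟨rfl, rfl⟩⟩ := mem_EG_w_iff.1 (hE he)
    exacts [⟨2, by omega, by omega, rfl⟩, ⟨3, by omega, by omega, rfl⟩]

lemma legalMove_g_iff_of_lt (hk : k + 1 < n) :
    LegalMove (Cset n m) (Rrel lit m) (Vtx.g k) (edgesAfter n m σ k) v F ↔
      v = Vtx.g (k + 1) ∧ ∃ b, F = edgesAfter n m (Function.update σ (k + 1) b) (k + 1) := by
  constructor
  · rintro ⟨p, hp⟩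
    obtain ⟨q, rfl, hw, hlast, rfl⟩ := hp.exists_stoppingWalk
    obtain ⟨b, ⟨-, rfl⟩ | ⟨h, -⟩⟩ := hw.eq_gadgetPath Set.sdiff_subset (by omega)
    · exact ⟨by simpa [gadgetPath] using hlast.symm, b, edgesAfter_succ⟩
    · omega
  · rintro ⟨rfl, b, rfl⟩
    rw [← edgesAfter_succ]
    refine ⟨_, legalMoveVia_of_pathEdges_subset (by simp [Cset]; omega) ?_
      (pathEdges_gadgetPath_subset (by omega)) ?_ rfl (by simp [Cset]; omega)⟩
    · cases b <;> simp [gadgetPath]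
    · cases b <;> simp [gadgetPath, Cset, mem_Rinv_Rrel_iff]

lemma edgesAfter_diff_pathEdges_gadgetPath_append (hk : k + 1 = n) (b : Bool) :
    edgesAfter n m σ k \ pathEdges (Vtx.g k :: (gadgetPath k b ++ xPath 1 c)) =
      clauseEdges n m (Function.update σ (k + 1) b) (c + 1) := by
  rw [pathEdges_gadgetPath_append, ← Set.sdiff_sdiff, edgesAfter_succ, clauseEdges, hk,
    Nat.add_sub_cancel]

lemma nodup_gadgetPath_append_xPath : (Vtx.g k :: (gadgetPath k b ++ xPath 1 c)).Nodup := by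
  have hx : ∀ v ∈ xPath 1 c, (∃ j, v = Vtx.x j) ∨ (∃ j, v = Vtx.y j) ∨ ∃ j, v = Vtx.z j :=
    fun v h => by rcases mem_xPath h with ⟨j, -, -, rfl⟩ | rfl | rfl <;> simp
  cases b <;> simp [gadgetPath, nodup_xPath] <;> refine ⟨?_, ?_, ?_, ?_, ?_, ?_⟩ <;>
    exact fun h => by simpa using hx _ h

lemma legalMove_g_iff_of_eq (hk : k + 1 = n) :
    LegalMove (Cset n m) (Rrel lit m) (Vtx.g k) (edgesAfter n m σ k) v F ↔
      ∃ i, 1 ≤ i ∧ i ≤ m ∧ v = Vtx.z i ∧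
        ∃ b, F = clauseEdges n m (Function.update σ (k + 1) b) i := by
  constructor
  · rintro ⟨p, hp⟩
    obtain ⟨q, rfl, hw, hlast, rfl⟩ := hp.exists_stoppingWalk
    obtain ⟨b, ⟨h, -⟩ | ⟨-, c, hc, rfl⟩⟩ := hw.eq_gadgetPath Set.sdiff_subset (by omega)
    · omega
    rw [List.getLast?_append, getLast?_xPath] at hlast
    refine ⟨c + 1, by omega, hc, ?_, b, edgesAfter_diff_pathEdges_gadgetPath_append hk b⟩
    simpa [add_comm, eq_comm] using hlast
  · rintro ⟨i, hi, hi', rfl, b, rfl⟩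
    obtain ⟨c, rfl⟩ : ∃ c, i = c + 1 := ⟨i - 1, by omega⟩
    rw [← edgesAfter_diff_pathEdges_gadgetPath_append hk]
    refine ⟨_, legalMoveVia_of_pathEdges_subset (by simp [Cset]; omega) ?_ ?_ ?_ ?_
      (by simp [Cset, hi'])⟩
    · exact nodup_gadgetPath_append_xPath
    · rw [pathEdges_gadgetPath_append]
      exact Set.union_subset (pathEdges_gadgetPath_subset (by omega))
        (hk ▸ pathEdges_g_xPath_subset hi')
    · rw [List.dropLast_append_of_ne_nil (by cases c <;> simp [xPath])]
      intro w hw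
      rcases List.mem_append.1 hw with h | h
      · cases b <;> simp [gadgetPath] at h <;> rcases h with rfl | rfl | rfl | rfl | rfl <;>
          simp [Cset, mem_Rinv_Rrel_iff] <;> omega
      · rcases mem_dropLast_xPath h with ⟨j, rfl⟩ | ⟨j, rfl⟩ <;> simp [Cset, mem_Rinv_Rrel_iff]
    · rw [List.getLast?_append, getLast?_xPath]
      simp [add_comm]

lemma clauseTrue_of_legalMove (hwf : LitWF n m lit) (hi : 1 ≤ i) (hi' : i ≤ m)
    (h : LegalMove (Cset n m) (Rrel lit m) (Vtx.z i) (clauseEdges n m σ i) v F) :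
    ClauseTrue lit i σ := by
  obtain ⟨p, hp⟩ := h
  obtain ⟨q, rfl, hw, hlast, -⟩ := hp.exists_stoppingWalk
  obtain ⟨j, hj, hj', rfl⟩ := transGen_z (fun _ h => h.1.1) (hw.transGen hlast)
  refine ⟨j, hj, hj', (w_mem_Rinv_clauseEdges_iff (i' := i) hwf hi hi' hj hj').1 ?_⟩
  simpa [Cset] using hp.2.1

/-- Walk to the first true literal: the `w_{i,j}` before it are dead, so the walk passes them. -/
lemma exists_legalMove_of_clauseTrue (hwf : LitWF n m lit) (hi : 1 ≤ i) (hi' : i ≤ m)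
    (hC : ClauseTrue lit i σ) :
    ∃ j F, LegalMove (Cset n m) (Rrel lit m) (Vtx.z i) (clauseEdges n m σ i) (Vtx.w i j) F ∧
      Vtx.w i j ∈ Rinv (Rrel lit m) (clauseEdges n m σ i) := by
  classical
  obtain ⟨hj, hj', hlive⟩ := Nat.find_spec hC
  set j := Nat.find hC
  have hlive' := (w_mem_Rinv_clauseEdges_iff (i' := i) hwf hi hi' hj hj').2 hlive
  refine ⟨j, _, ⟨_, legalMoveVia_of_pathEdges_subset (q := (List.range j).map (Vtx.w i ·.succ))
    (by simp [Cset, hi, hi']) ?_ ?_ ?_ ?_ (.inr hlive')⟩, hlive'⟩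
  · exact List.nodup_cons.2 ⟨by simp, List.nodup_range.map fun a b h => by simpa using h⟩
  · interval_cases j <;>
      simp [List.range_succ, pathEdges_cons_cons, pathEdges_singleton, Set.insert_subset_iff] <;>
      simp [mem_clauseEdges_of_mem_EG, mem_EG_z_iff, mem_EG_w_iff, hi, hi']
  · intro w hw
    have hdead : ∀ j', 1 ≤ j' → j' < j →
        Vtx.w i j' ∉ Cset n m ∪ Rinv (Rrel lit m) (clauseEdges n m σ i) := fun j' h1 hlt => by
      simpa [Cset, w_mem_Rinv_clauseEdges_iff hwf hi hi' h1 (by omega : j' ≤ 3), h1,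
        show j' ≤ 3 by omega] using Nat.find_min hC hlt
    interval_cases j <;> simp [List.range_succ] at hw <;> rcases hw with rfl | rfl <;>
      exact hdead _ (by norm_num) (by norm_num)
  · simp [List.getLast?_range]; omega

lemma moverWins_z_iff (hwf : LitWF n m lit) (hi : 1 ≤ i) (hi' : i ≤ m) :
    MoverWins (Cset n m) (Rrel lit m) true (Vtx.z i) (clauseEdges n m σ i) ↔
      ClauseTrue lit i σ := by
  refine ⟨fun h => ?_, fun hC => ?_⟩
  · cases h with
    | winsNow hm _ => exact clauseTrue_of_legalMove hwf hi hi' hm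
    | winsLater hm _ => exact clauseTrue_of_legalMove hwf hi hi' hm
  · obtain ⟨j, F, hm, hlive⟩ := exists_legalMove_of_clauseTrue hwf hi hi' hC
    exact .winsNow hm hlive

lemma notMem_Rinv_of_legalMove_g (hk : k < n)
    (h : LegalMove (Cset n m) (Rrel lit m) (Vtx.g k) (edgesAfter n m σ k) v F) :
    v ∉ Rinv (Rrel lit m) (edgesAfter n m σ k) := by
  obtain hlt | heq : k + 1 < n ∨ k + 1 = n := by omega
  · obtain ⟨rfl, -⟩ := (legalMove_g_iff_of_lt hlt).1 h
    simp [mem_Rinv_Rrel_iff]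
  · obtain ⟨i, -, -, rfl, -⟩ := (legalMove_g_iff_of_eq heq).1 h
    simp [mem_Rinv_Rrel_iff]

lemma moverWins_true_g_iff (hk : k + 1 < n) :
    MoverWins (Cset n m) (Rrel lit m) true (Vtx.g k) (edgesAfter n m σ k) ↔
      ∃ b, MoverWins (Cset n m) (Rrel lit m) false (Vtx.g (k + 1))
        (edgesAfter n m (Function.update σ (k + 1) b) (k + 1)) := by
  rw [moverWins_true_iff fun _ _ h => notMem_Rinv_of_legalMove_g (by omega) h]
  simp only [legalMove_g_iff_of_lt hk]
  constructor
  · rintro ⟨_, _, ⟨rfl, b, rfl⟩, h⟩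
    exact ⟨b, h⟩
  · rintro ⟨b, h⟩
    exact ⟨_, _, ⟨rfl, b, rfl⟩, h⟩

lemma moverWins_false_g_iff (hk : k + 1 < n) :
    MoverWins (Cset n m) (Rrel lit m) false (Vtx.g k) (edgesAfter n m σ k) ↔
      ∀ b, MoverWins (Cset n m) (Rrel lit m) true (Vtx.g (k + 1))
        (edgesAfter n m (Function.update σ (k + 1) b) (k + 1)) := by
  rw [moverWins_false_iff, and_iff_right fun _ _ h => notMem_Rinv_of_legalMove_g (by omega) h]
  simp only [legalMove_g_iff_of_lt hk]
  constructor
  · exact fun h b => h _ _ ⟨rfl, b, rfl⟩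
  · rintro h _ _ ⟨rfl, b, rfl⟩
    exact h b

lemma moverWins_false_g_iff_of_eq (hwf : LitWF n m lit) (hk : k + 1 = n) :
    MoverWins (Cset n m) (Rrel lit m) false (Vtx.g k) (edgesAfter n m σ k) ↔
      ∀ b, FTrue lit m (Function.update σ (k + 1) b) := by
  rw [moverWins_false_iff, and_iff_right fun _ _ h => notMem_Rinv_of_legalMove_g (by omega) h]
  simp only [legalMove_g_iff_of_eq hk]
  constructor
  · exact fun h b i hi hi' => (moverWins_z_iff hwf hi hi').1 (h _ _ ⟨i, hi, hi', rfl, b, rfl⟩)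
  · rintro h _ _ ⟨i, hi, hi', rfl, b, rfl⟩
    exact (moverWins_z_iff hwf hi hi').2 (h b i hi hi')

/-- The player to move at `g k` is the `∃`-player exactly when `x_{k+1}` is existentially
quantified, i.e. when `k` is even. -/
theorem moverWins_iff_QAux (hn : Even n) (hwf : LitWF n m lit) (k : ℕ) (hk : k < n)
    (σ : ℕ → Bool) :
    MoverWins (Cset n m) (Rrel lit m) (decide (k % 2 = 0)) (Vtx.g k) (edgesAfter n m σ k) ↔
      QAux (FTrue lit m) (k + 1) (n - k) σ := by
  rw [show n - k = n - (k + 1) + 1 by omega, QAux]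
  obtain hlt | heq : k + 1 < n ∨ k + 1 = n := by omega
  · have ih b := moverWins_iff_QAux hn hwf (k + 1) hlt (Function.update σ (k + 1) b)
    rcases Nat.mod_two_eq_zero_or_one k with hpar | hpar
    · rw [decide_eq_true hpar, if_pos (by omega), moverWins_true_g_iff hlt]
      exact exists_congr fun b => by rw [← ih b, decide_eq_false (by omega)]
    · rw [decide_eq_false (by omega), if_neg (by omega), moverWins_false_g_iff hlt]
      exact forall_congr' fun b => by rw [← ih b, decide_eq_true (by omega)]
  · have hpar : k % 2 = 1 := by obtain ⟨r, rfl⟩ := hn; omega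
    rw [decide_eq_false (by omega), if_neg (by omega), moverWins_false_g_iff_of_eq hwf heq,
      ← heq, Nat.sub_self]
    rfl
termination_by n - k

end Construction

theorem existsPlayer_wins_iff_qbf_true_general
    (n m : ℕ) (hn : Even n) (hn2 : 2 ≤ n)
    (lit : ℕ → ℕ → Lit) (hwf : LitWF n m lit) :
    MoverWins (Cset n m) (Rrel lit m) true (Vtx.g 0) (EG n m) ↔ QTrue n m lit := by
  simpa [edgesAfter, deletedEdges_zero, QTrue] using
    moverWins_iff_QAux hn hwf 0 (by omega) (fun _ => false)

/-- In the graph game on `(G, C, s, R)` constructed from the restricted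
quantified Boolean formula `Q`, the ∃-player (who moves first, from `s = g₀`, with
initial edge set `E(G)`) has a winning strategy if and only if `Q` is true. -/
theorem existsPlayer_wins_iff_qbf_true
    (n m : ℕ) (hn : Even n) (hn2 : 2 ≤ n) (hm : 1 ≤ m)
    (lit : ℕ → ℕ → Lit) (hwf : LitWF n m lit) :
    MoverWins (Cset n m) (Rrel lit m) true (Vtx.g 0) (EG n m) ↔ QTrue n m lit :=
  existsPlayer_wins_iff_qbf_true_general n m hn hn2 lit hwf

end PhutballQBF
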